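/- arXiv:0911.5239 — 3 statements merged into one kernel-verified Lean document; each statement's English description precedes it below -/
import Mathlib

section
/- For each agent i and all t, τ ∈ ℕ, |x_i(t+τ) - x_i(t)| ≤ (R/(1-ρ)) ρ^t (1 - ρ^τ) ≤ (R/(1-ρ)) ρ^t; consequently each sequence (x_i(t)) is Cauchy and hence convergent in ℝ. -/
open Filter Topology

theorem stmt_1 {n : ℕ} (x : ℕ → Fin n → ℝ) (p : ℕ → Fin n → Fin n → ℝ) (R ρ : ℝ)
    (hR : 0 < R) (hρ : ρ ∈ Set.Ioo (0:ℝ) 1)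
    (hdyn : ∀ t i, x (t+1) i = ∑ j, p t i j * x t j)
    (hp01 : ∀ t i j, p t i j ∈ Set.Icc (0:ℝ) 1)
    (hrow : ∀ t i, ∑ j, p t i j = 1)
    (hconf : ∀ t i j, j ≠ i → p t i j ≠ 0 → |x t i - x t j| ≤ R * ρ ^ t) :
    (∀ i t τ, |x (t+τ) i - x t i| ≤ R / (1-ρ) * ρ ^ t * (1 - ρ ^ τ) ∧
      R / (1-ρ) * ρ ^ t * (1 - ρ ^ τ) ≤ R / (1-ρ) * ρ ^ t) ∧
    (∀ i, CauchySeq (fun t => x t i) ∧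
      ∃ l : ℝ, Tendsto (fun t => x t i) atTop (𝓝 l)) := by
  obtain ⟨hρ0, hρ1⟩ := hρ
  have h1ρ : (0:ℝ) < 1 - ρ := by linarith
  -- one-step bound
  have step : ∀ t i, |x (t+1) i - x t i| ≤ R * ρ ^ t := by
    intro t i
    have hx : x (t+1) i - x t i = ∑ j, p t i j * (x t j - x t i) := by
      rw [hdyn t i]
      simp only [mul_sub]
      rw [Finset.sum_sub_distrib, ← Finset.sum_mul, hrow t i, one_mul]
    rw [hx]
    calc |∑ j, p t i j * (x t j - x t i)| ≤ ∑ j, |p t i j * (x t j - x t i)| :=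
          Finset.abs_sum_le_sum_abs _ _
      _ ≤ ∑ j : Fin n, p t i j * (R * ρ ^ t) := by
          apply Finset.sum_le_sum
          intro j _
          rw [abs_mul, abs_of_nonneg (hp01 t i j).1]
          by_cases hji : j = i
          · rw [hji, sub_self, abs_zero, mul_zero]
            exact mul_nonneg (hp01 t i i).1 (mul_nonneg hR.le (pow_nonneg hρ0.le t))
          · by_cases hp : p t i j = 0
            · simp [hp, mul_nonneg hR.le (pow_nonneg hρ0.le t)]
            · apply mul_le_mul_of_nonneg_left _ (hp01 t i j).1
              rw [abs_sub_comm]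
              exact hconf t i j hji hp
      _ = (∑ j, p t i j) * (R * ρ ^ t) := by rw [Finset.sum_mul]
      _ = R * ρ ^ t := by rw [hrow t i]; ring
  -- telescoping bound with geometric sum
  have tele : ∀ i t τ, |x (t+τ) i - x t i| ≤ R * ρ ^ t * ∑ k ∈ Finset.range τ, ρ ^ k := by
    intro i t τ
    induction τ with
    | zero => simp
    | succ m ih =>
      have h1 : |x (t+(m+1)) i - x t i| ≤ |x (t+m+1) i - x (t+m) i| + |x (t+m) i - x t i| := by
        have : x (t+(m+1)) i - x t i = (x (t+m+1) i - x (t+m) i) + (x (t+m) i - x t i) := by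
          have : t + (m+1) = t + m + 1 := by ring
          rw [this]; ring
        rw [this]; exact abs_add_le _ _
      calc |x (t+(m+1)) i - x t i| ≤ |x (t+m+1) i - x (t+m) i| + |x (t+m) i - x t i| := h1
        _ ≤ R * ρ ^ (t+m) + R * ρ ^ t * ∑ k ∈ Finset.range m, ρ ^ k :=
            add_le_add (step (t+m) i) ih
        _ = R * ρ ^ t * ∑ k ∈ Finset.range (m+1), ρ ^ k := by
            rw [Finset.sum_range_succ, pow_add]; ring
  have geom : ∀ τ : ℕ, ∑ k ∈ Finset.range τ, ρ ^ k = (1 - ρ ^ τ) / (1 - ρ) := by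
    intro τ
    rw [geom_sum_eq (by linarith : ρ ≠ 1), ← neg_div_neg_eq]
    congr 1 <;> ring
  have main : ∀ i t τ, |x (t+τ) i - x t i| ≤ R / (1-ρ) * ρ ^ t * (1 - ρ ^ τ) := by
    intro i t τ
    have := tele i t τ
    rw [geom τ] at this
    calc |x (t+τ) i - x t i| ≤ R * ρ ^ t * ((1 - ρ ^ τ) / (1 - ρ)) := this
      _ = R / (1-ρ) * ρ ^ t * (1 - ρ ^ τ) := by field_simp
  constructor
  · intro i t τ
    refine ⟨main i t τ, ?_⟩
    have hC : 0 ≤ R / (1-ρ) * ρ ^ t :=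
      mul_nonneg (div_nonneg hR.le h1ρ.le) (pow_nonneg hρ0.le t)
    have : 1 - ρ ^ τ ≤ 1 := by
      have : 0 ≤ ρ ^ τ := pow_nonneg hρ0.le τ
      linarith
    exact mul_le_of_le_one_right hC this
  · intro i
    have hc : CauchySeq (fun t => x t i) := by
      apply cauchySeq_of_le_geometric ρ R hρ1
      intro t
      rw [Real.dist_eq]
      have := step t i
      rwa [abs_sub_comm] at this
    exact ⟨hc, cauchySeq_tendsto_of_complete hc⟩
end

section
/- For each agent i, the limit x_i* = lim_{t→∞} x_i(t) exists and satisfies |x_i(t) - x_i*| ≤ (R/(1-ρ)) ρ^t for all t ∈ ℕ. -/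
/-! Each step moves agent `i` to a convex combination of opinions within `R ρ^t` of its own,
so `|x_i(t+1) - x_i(t)| ≤ R ρ^t`; a sequence with geometrically bounded increments converges,
and its distance to the limit is bounded by the tail of the geometric series. -/

open Filter Topology

theorem abs_sum_mul_sub_le_of_forall_ne_zero {ι : Type*} (s : Finset ι) (w y : ι → ℝ) {a c : ℝ}
    (hw : ∀ j ∈ s, 0 ≤ w j) (hsum : ∑ j ∈ s, w j = 1)
    (hy : ∀ j ∈ s, w j ≠ 0 → |y j - a| ≤ c) :
    |∑ j ∈ s, w j * y j - a| ≤ c := by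
  have hcenter : ∑ j ∈ s, w j * y j - a = ∑ j ∈ s, w j * (y j - a) := by
    simp only [mul_sub, Finset.sum_sub_distrib, ← Finset.sum_mul, hsum, one_mul]
  calc |∑ j ∈ s, w j * y j - a|
      ≤ ∑ j ∈ s, w j * |y j - a| := by
        rw [hcenter]
        refine (Finset.abs_sum_le_sum_abs _ _).trans_eq (Finset.sum_congr rfl fun j hj => ?_)
        rw [abs_mul, abs_of_nonneg (hw j hj)]
    _ ≤ ∑ j ∈ s, w j * c := by
        refine Finset.sum_le_sum fun j hj => ?_
        rcases eq_or_ne (w j) 0 with hwj | hwj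
        · simp [hwj]
        · exact mul_le_mul_of_nonneg_left (hy j hj hwj) (hw j hj)
    _ = c := by rw [← Finset.sum_mul, hsum, one_mul]

theorem exists_tendsto_dist_le_of_le_geometric {α : Type*} [PseudoMetricSpace α]
    [CompleteSpace α] {u : ℕ → α} {C r : ℝ} (hr : r < 1)
    (hu : ∀ t, dist (u t) (u (t + 1)) ≤ C * r ^ t) :
    ∃ l, Tendsto u atTop (𝓝 l) ∧ ∀ t, dist (u t) l ≤ C / (1 - r) * r ^ t := by
  obtain ⟨l, hl⟩ := cauchySeq_tendsto_of_complete (cauchySeq_of_le_geometric r C hr hu)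
  refine ⟨l, hl, fun t => ?_⟩
  rw [div_mul_eq_mul_div]
  exact dist_le_of_le_geometric_of_tendsto r C hr hu hl t

theorem stmt_2 {n : ℕ} (x : ℕ → Fin n → ℝ) (p : ℕ → Fin n → Fin n → ℝ) (R ρ : ℝ)
    (hR : 0 < R) (hρ : ρ ∈ Set.Ioo (0:ℝ) 1)
    (hdyn : ∀ t i, x (t+1) i = ∑ j, p t i j * x t j)
    (hp01 : ∀ t i j, p t i j ∈ Set.Icc (0:ℝ) 1)
    (hrow : ∀ t i, ∑ j, p t i j = 1)
    (hconf : ∀ t i j, j ≠ i → p t i j ≠ 0 → |x t i - x t j| ≤ R * ρ ^ t) :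
    ∀ i, ∃ xstar : ℝ, Tendsto (fun t => x t i) atTop (𝓝 xstar) ∧
      ∀ t, |x t i - xstar| ≤ R / (1-ρ) * ρ ^ t := by
  intro i
  have hstep : ∀ t, dist (x t i) (x (t + 1) i) ≤ R * ρ ^ t := fun t => by
    rw [dist_comm, Real.dist_eq, hdyn]
    refine abs_sum_mul_sub_le_of_forall_ne_zero _ _ _ (fun j _ => (hp01 t i j).1) (hrow t i)
      fun j _ hpj => ?_
    rcases eq_or_ne j i with rfl | hji
    · rw [sub_self, abs_zero]
      exact mul_nonneg hR.le (pow_nonneg hρ.1.le t)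
    · rw [abs_sub_comm]
      exact hconf t i j hji hpj
  obtain ⟨xstar, hlim, hdist⟩ := exists_tendsto_dist_le_of_le_geometric hρ.2 hstep
  exact ⟨xstar, hlim, fun t => Real.dist_eq _ _ ▸ hdist t⟩
end

section
/- Suppose every pair (i,j) in the edge set E_∞ of infinitely recurrent interactions has x_i* = x_j* and suppose there exist M ≥ 0 and ρ̲ < ρ with |x_i(t) - x_i*| ≤ M ρ̲^t for all i and t. Then there exists T' ∈ ℕ such that for all t ≥ T', the interaction edge set E(t) equals E_∞ and also equals E_𝒞 = {(i,j) ∈ E : x_i* = x_j*}. -/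
/-!
Fast convergence at rate `ρ' < ρ` separates the edges. If `x*_i = x*_j`, then
`|x_i(t) - x_j(t)| ≤ 2 M ρ'^t`, which is eventually below the threshold `R ρ^t`. If
`x*_i ≠ x*_j`, then `|x_i(t) - x_j(t)| ≥ |x*_i - x*_j| - 2 M ρ'^t`, which eventually exceeds
`R ρ^t → 0`. As there are finitely many edges, `E(t)` eventually equals the set of edges with equal
limits, and an eventually constant sequence of sets has that constant as its set of infinitely
recurrent elements.
-/

open Filter Topology

/-- interaction edges at time t -/
def interE {n : ℕ} (E : Set (Fin n × Fin n)) (x : ℕ → Fin n → ℝ) (R ρ : ℝ)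
    (t : ℕ) : Set (Fin n × Fin n) :=
  {e ∈ E | |x t e.1 - x t e.2| ≤ R * ρ ^ t}

/-- infinitely recurrent interaction edges -/
def interEinf {n : ℕ} (E : Set (Fin n × Fin n)) (x : ℕ → Fin n → ℝ) (R ρ : ℝ) :
    Set (Fin n × Fin n) :=
  {e ∈ E | ∀ t : ℕ, ∃ s ≥ t, e ∈ interE E x R ρ s}

section

variable {R ρ ρ' M : ℝ}

lemma eventually_mul_pow_le_mul_pow (C : ℝ) (hR : 0 < R) (hρ' : 0 ≤ ρ') (hρρ : ρ' < ρ) :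
    ∀ᶠ t : ℕ in atTop, C * ρ' ^ t ≤ R * ρ ^ t := by
  filter_upwards [((isLittleO_pow_pow_of_lt_left hρ' hρρ).const_mul_left C).bound hR] with t ht
  have hρt : 0 ≤ ρ ^ t := pow_nonneg (hρ'.trans hρρ.le) t
  simpa only [Real.norm_eq_abs, abs_of_nonneg hρt] using (le_abs_self _).trans ht

lemma eventually_abs_sub_le_mul_pow_iff {a b : ℕ → ℝ} {a' b' : ℝ} (hR : 0 < R) (hρ : ρ < 1)
    (hρ' : 0 ≤ ρ') (hρρ : ρ' < ρ) (ha : ∀ t, |a t - a'| ≤ M * ρ' ^ t)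
    (hb : ∀ t, |b t - b'| ≤ M * ρ' ^ t) :
    ∀ᶠ t : ℕ in atTop, (|a t - b t| ≤ R * ρ ^ t ↔ a' = b') := by
  by_cases hab : a' = b'
  · subst hab
    filter_upwards [eventually_mul_pow_le_mul_pow (2 * M) hR hρ' hρρ] with t ht
    refine iff_of_true ?_ rfl
    calc |a t - b t| ≤ |a t - a'| + |a' - b t| := abs_sub_le _ _ _
      _ = |a t - a'| + |b t - a'| := by rw [abs_sub_comm a']
      _ ≤ 2 * M * ρ' ^ t := by linarith [ha t, hb t]
      _ ≤ R * ρ ^ t := ht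
  · have hgap : 0 < |a' - b'| := abs_pos.2 (sub_ne_zero.2 hab)
    have hlim : Tendsto (fun t : ℕ => R * ρ ^ t + 2 * M * ρ' ^ t) atTop (𝓝 0) := by
      simpa using
        ((tendsto_pow_atTop_nhds_zero_of_lt_one (hρ'.trans hρρ.le) hρ).const_mul R).add
          ((tendsto_pow_atTop_nhds_zero_of_lt_one hρ' (hρρ.trans hρ)).const_mul (2 * M))
    filter_upwards [hlim.eventually_lt_const hgap] with t ht
    refine iff_of_false (fun hle => ?_) hab
    have h₁ := abs_sub_le a' (a t) b'
    have h₂ := abs_sub_le (a t) (b t) b'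
    rw [abs_sub_comm a' (a t)] at h₁
    linarith [ha t, hb t]

end

lemma eventually_interE_eq {n : ℕ} {E : Set (Fin n × Fin n)} {x : ℕ → Fin n → ℝ}
    {xstar : Fin n → ℝ} {R ρ M ρ' : ℝ} (hR : 0 < R) (hρ : ρ < 1) (hρ' : 0 ≤ ρ') (hρρ : ρ' < ρ)
    (hfast : ∀ i t, |x t i - xstar i| ≤ M * ρ' ^ t) :
    ∀ᶠ t in atTop, interE E x R ρ t = {e ∈ E | xstar e.1 = xstar e.2} := by
  have hedge : ∀ᶠ t in atTop, ∀ e : Fin n × Fin n,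
      (|x t e.1 - x t e.2| ≤ R * ρ ^ t ↔ xstar e.1 = xstar e.2) :=
    eventually_all.2 fun e =>
      eventually_abs_sub_le_mul_pow_iff hR hρ hρ' hρρ (hfast e.1) (hfast e.2)
  filter_upwards [hedge] with t ht
  ext e
  exact and_congr_right fun _ => ht e

lemma interEinf_eq_of_eventually_interE_eq {n : ℕ} {E S : Set (Fin n × Fin n)}
    {x : ℕ → Fin n → ℝ} {R ρ : ℝ} (h : ∀ᶠ t in atTop, interE E x R ρ t = S) :
    interEinf E x R ρ = S := by
  obtain ⟨T, hT⟩ := eventually_atTop.1 h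
  ext e
  constructor
  · rintro ⟨-, hrec⟩
    obtain ⟨s, hs, hes⟩ := hrec T
    rwa [hT s hs] at hes
  · intro heS
    have heE : e ∈ E := (hT T le_rfl ▸ heS).1
    exact ⟨heE, fun t => ⟨max t T, le_max_left t T, by rwa [hT _ (le_max_right t T)]⟩⟩

theorem stmt_7_general {n : ℕ} (E : Set (Fin n × Fin n)) (x : ℕ → Fin n → ℝ)
    (xstar : Fin n → ℝ) (R ρ M ρ' : ℝ)
    (hR : 0 < R) (hρ : ρ ∈ Set.Ioo (0:ℝ) 1) (hρ' : 0 < ρ') (hρρ : ρ' < ρ)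
    (hfast : ∀ i t, |x t i - xstar i| ≤ M * ρ' ^ t) :
    ∃ T' : ℕ, ∀ t ≥ T',
      interE E x R ρ t = interEinf E x R ρ ∧
      interEinf E x R ρ = {e ∈ E | xstar e.1 = xstar e.2} := by
  have hE := eventually_interE_eq (E := E) hR hρ.2 hρ'.le hρρ hfast
  have hEinf := interEinf_eq_of_eventually_interE_eq hE
  obtain ⟨T', hT'⟩ := eventually_atTop.1 hE
  exact ⟨T', fun t ht => ⟨(hT' t ht).trans hEinf.symm, hEinf⟩⟩

theorem stmt_7 {n : ℕ} (E : Set (Fin n × Fin n)) (x : ℕ → Fin n → ℝ)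
    (xstar : Fin n → ℝ) (R ρ M ρ' : ℝ)
    (hR : 0 < R) (hρ : ρ ∈ Set.Ioo (0:ℝ) 1) (hρ' : 0 < ρ') (hρρ : ρ' < ρ)
    (hM : 0 ≤ M)
    (hlim : ∀ i, Tendsto (fun t => x t i) atTop (𝓝 (xstar i)))
    (hfast : ∀ i t, |x t i - xstar i| ≤ M * ρ' ^ t)
    (hagree : ∀ e ∈ interEinf E x R ρ, xstar e.1 = xstar e.2) :
    ∃ T' : ℕ, ∀ t ≥ T',
      interE E x R ρ t = interEinf E x R ρ ∧
      interEinf E x R ρ = {e ∈ E | xstar e.1 = xstar e.2} :=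
  stmt_7_general E x xstar R ρ M ρ' hR hρ hρ' hρρ hfast
end
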